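/- arXiv:1504.02214 — 7 statements merged into one kernel-verified Lean document; each statement's English description precedes it below -/
import Mathlib

section
/- Let x ∈ ℂ^N, N = 2^J, have support length m ≤ 2^L with L < J-1. Then x is uniquely determined by its 2^{L+1}-periodization x^(L+1) together with one nonzero odd-indexed Fourier coefficient x̂_{2k₀+1}. Concretely: if u, v ∈ ℂ^N both have support contained in a cyclic interval of length m ≤ 2^L, have the same 2^{L+1}-periodization, and satisfy û_{2k₀+1} = v̂_{2k₀+1} ≠ 0 for some k₀, then u = v. -/
/-!
Write `P = 2^{L+1}`. A cyclic interval of length `m ≤ P / 2` meets every residue class mod `P` at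
most once, so the periodization of `u` lists the values of `u` and only loses their positions;
matching the nonzero values of `u` and `v` class by class, the positions differ by a single shift
`t` (two offsets in `[0, m)` that agree mod `P` are equal since `2m ≤ P`). Hence `u (· + t) = v`,
so `v̂ ξ = exp (2πi tξ / 2^J) û ξ`. Equal nonzero coefficients force `tξ ≡ 0 mod 2^J`, and an odd
`ξ` is a unit mod `2^J`, so `t = 0`.
-/

/-- Discrete Fourier transform of length `N`, `(dft N x) k = ∑_{j<N} x j ω_N^{jk}`
with `ω_N = e^{-2πi/N}`. -/
noncomputable def dft (N : ℕ) (x : ℕ → ℂ) (k : ℕ) : ℂ :=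
  ∑ j ∈ Finset.range N, x j * Complex.exp (-2 * Real.pi * Complex.I * ((j : ℂ) * k) / N)

/-- `2^j`-periodization of a vector of length `2^J`. -/
noncomputable def perio (x : ℕ → ℂ) (J j k : ℕ) : ℂ :=
  ∑ ℓ ∈ Finset.range (2 ^ (J - j)), x (k + 2 ^ j * ℓ)

open Finset
open scoped ZMod

namespace ZMod

section Fiber

variable {M : Type*} [AddCommMonoid M] {N P : ℕ}

def SupportedOnInterval (x : ZMod N → M) (μ : ZMod N) (m : ℕ) : Prop :=
  ∀ j, x j ≠ 0 → ∃ r < m, j = μ + r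

variable (hPN : P ∣ N) {m : ℕ}

lemma eq_of_castHom_add_natCast_eq (hmP : m ≤ P) (μ : ZMod N) {r s : ℕ} (hr : r < m) (hs : s < m)
    (h : castHom hPN (ZMod P) (μ + r) = castHom hPN (ZMod P) (μ + s)) : r = s := by
  simp only [map_add, map_natCast, add_right_inj] at h
  rw [← val_natCast_of_lt (hr.trans_le hmP), h, val_natCast_of_lt (hs.trans_le hmP)]

variable [NeZero N]

def fiberSum (x : ZMod N → M) (c : ZMod P) : M :=
  ∑ j with castHom hPN (ZMod P) j = c, x j

lemma fiberSum_castHom_add_natCast {x : ZMod N → M} {μ : ZMod N}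
    (hx : SupportedOnInterval x μ m) (hmP : m ≤ P) {r : ℕ} (hr : r < m) :
    fiberSum hPN x (castHom hPN (ZMod P) (μ + r)) = x (μ + r) := by
  refine sum_eq_single_of_mem _ (mem_filter.2 ⟨mem_univ _, rfl⟩) fun j hj hjr ↦ ?_
  by_contra hxj
  obtain ⟨s, hs, rfl⟩ := hx j hxj
  exact hjr (by rw [eq_of_castHom_add_natCast_eq hPN hmP μ hs hr (mem_filter.1 hj).2])

lemma fiberSum_castHom_of_ne_zero {x : ZMod N → M} {μ : ZMod N}
    (hx : SupportedOnInterval x μ m) (hmP : m ≤ P) {j : ZMod N} (hxj : x j ≠ 0) :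
    fiberSum hPN x (castHom hPN (ZMod P) j) = x j := by
  obtain ⟨r, hr, rfl⟩ := hx j hxj
  exact fiberSum_castHom_add_natCast hPN hx hmP hr

lemma apply_add_eq_of_fiberSum_eq {u v : ZMod N → M} {μu μv : ZMod N}
    (hu : SupportedOnInterval u μu m) (hv : SupportedOnInterval v μv m) (hmP : 2 * m ≤ P)
    (huv : fiberSum hPN u = fiberSum hPN v) {j₀ t : ZMod N} (hv₀ : v j₀ ≠ 0)
    (hu₀ : u (j₀ + t) ≠ 0) (ht : castHom hPN (ZMod P) t = 0) {j : ZMod N} (hvj : v j ≠ 0) :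
    u (j + t) = v j := by
  have hmP' : m ≤ P := by omega
  have hfib : fiberSum hPN u (castHom hPN (ZMod P) j) = v j := by
    rw [huv, fiberSum_castHom_of_ne_zero hPN hv hmP' hvj]
  obtain ⟨j', hj', huj'⟩ := exists_ne_zero_of_sum_ne_zero (hfib ▸ hvj)
  have hj'j : castHom hPN (ZMod P) j' = castHom hPN (ZMod P) j := (mem_filter.1 hj').2
  suffices j' = j + t by
    rw [← this, ← hfib, ← hj'j, fiberSum_castHom_of_ne_zero hPN hu hmP' huj']
  obtain ⟨r₀, hr₀, hr₀e⟩ := hu _ hu₀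
  obtain ⟨s₀, hs₀, rfl⟩ := hv _ hv₀
  obtain ⟨r, hr, rfl⟩ := hu _ huj'
  obtain ⟨s, hs, rfl⟩ := hv _ hvj
  have hcast : ((r + s₀ : ℕ) : ZMod P) = ((r₀ + s : ℕ) : ZMod P) := by
    have := congrArg (castHom hPN (ZMod P)) hr₀e
    simp only [map_add, map_natCast, ht, add_zero] at this hj'j
    push_cast
    linear_combination hj'j + this
  -- both sides are below `2 * m ≤ P`
  have hnat : r + s₀ = r₀ + s := by
    rw [← val_natCast_of_lt (n := P) (a := r + s₀) (by omega), hcast,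
      val_natCast_of_lt (by omega)]
  have := congrArg (Nat.cast : ℕ → ZMod N) hnat
  push_cast at this
  linear_combination this - hr₀e

lemma exists_apply_add_eq_of_fiberSum_eq {u v : ZMod N → M} {μu μv : ZMod N}
    (hu : SupportedOnInterval u μu m) (hv : SupportedOnInterval v μv m) (hmP : 2 * m ≤ P)
    (huv : fiberSum hPN u = fiberSum hPN v) (hv0 : v ≠ 0) : ∃ t, ∀ j, u (j + t) = v j := by
  obtain ⟨j₀, hv₀⟩ := Function.ne_iff.1 hv0
  have hfib : fiberSum hPN u (castHom hPN (ZMod P) j₀) = v j₀ := by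
    rw [huv, fiberSum_castHom_of_ne_zero hPN hv (by omega) hv₀]
  obtain ⟨j₁, hj₁, hu₁⟩ := exists_ne_zero_of_sum_ne_zero (hfib ▸ hv₀)
  have ht : castHom hPN (ZMod P) (j₁ - j₀) = 0 := by
    rw [map_sub, (mem_filter.1 hj₁).2, sub_self]
  have hu₀ : u (j₀ + (j₁ - j₀)) ≠ 0 := by rwa [add_sub_cancel]
  refine ⟨j₁ - j₀, fun j ↦ ?_⟩
  by_cases hvj : v j = 0
  · -- the same argument with `u` and `v` exchanged shifts the support of `u` back into that of `v`
    by_contra h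
    rw [hvj] at h
    have := apply_add_eq_of_fiberSum_eq hPN hv hu hmP huv.symm hu₀ (by rwa [add_neg_cancel_right])
      (by rw [map_neg, ht, neg_zero]) h
    rw [add_neg_cancel_right, hvj] at this
    exact h this.symm
  · exact apply_add_eq_of_fiberSum_eq hPN hu hv hmP huv hv₀ hu₀ ht hvj

lemma sum_val_eq_sum_range (f : ℕ → M) : ∑ j : ZMod N, f j.val = ∑ i ∈ range N, f i :=
  sum_nbij val (fun j _ ↦ mem_range.2 j.val_lt) (fun _ _ _ _ h ↦ val_injective N h)
    (fun i hi ↦ ⟨i, mem_univ _, val_natCast_of_lt (mem_range.1 hi)⟩) fun _ _ ↦ rfl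

lemma sum_range_add_mul_eq_fiberSum (f : ℕ → M) {k : ℕ} (hk : k < P) :
    ∑ ℓ ∈ range (N / P), f (k + P * ℓ) = fiberSum hPN (fun j ↦ f j.val) k := by
  have hP : 0 < P := by omega
  have hlt : ∀ ℓ ∈ range (N / P), k + P * ℓ < N := fun ℓ hℓ ↦
    calc k + P * ℓ < P * (ℓ + 1) := by rw [mul_add_one]; omega
      _ ≤ P * (N / P) := Nat.mul_le_mul_left _ (mem_range.1 hℓ)
      _ = N := Nat.mul_div_cancel' hPN
  refine sum_nbij' (fun ℓ ↦ ((k + P * ℓ : ℕ) : ZMod N)) (fun j ↦ j.val / P) ?_ ?_ ?_ ?_ ?_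
  · intro ℓ _
    rw [mem_filter, castHom_apply, cast_natCast hPN]
    simp
  · intro j _
    exact mem_range.2 (Nat.div_lt_div_of_lt_of_dvd hPN j.val_lt)
  · intro ℓ hℓ
    rw [val_natCast_of_lt (hlt ℓ hℓ), Nat.add_mul_div_left _ _ hP, Nat.div_eq_of_lt hk, zero_add]
  · intro j hj
    have : j.val % P = k := by
      have := (mem_filter.1 hj).2
      rw [castHom_apply, ← natCast_zmod_val j, cast_natCast hPN, natCast_eq_natCast_iff'] at this
      rwa [Nat.mod_eq_of_lt hk] at this
    rw [← this, Nat.mod_add_div, natCast_zmod_val]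
  · intro ℓ hℓ
    rw [val_natCast_of_lt (hlt ℓ hℓ)]

end Fiber

section Fourier

variable {N : ℕ} [NeZero N]

lemma dft_comp_add_right {E : Type*} [AddCommGroup E] [Module ℂ E] (Φ : ZMod N → E)
    (t k : ZMod N) : 𝓕 (fun j ↦ Φ (j + t)) k = stdAddChar (t * k) • 𝓕 Φ k := by
  simp only [dft_apply, smul_sum, smul_smul, ← AddChar.map_add_eq_mul]
  refine Fintype.sum_equiv (Equiv.addRight t) _ _ fun j ↦ ?_
  rw [Equiv.coe_addRight]
  congr 2
  ring

lemma eq_zero_of_dft_comp_add_right_eq {Φ : ZMod N → ℂ} {t k : ZMod N} (hk : IsUnit k)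
    (hΦ : 𝓕 Φ k ≠ 0) (h : 𝓕 (fun j ↦ Φ (j + t)) k = 𝓕 Φ k) : t = 0 := by
  rw [dft_comp_add_right, smul_eq_mul, mul_eq_right₀ hΦ,
    ← AddChar.map_zero_eq_one (stdAddChar (N := N))] at h
  exact hk.mul_left_eq_zero.1 (injective_stdAddChar h)

end Fourier

theorem eq_of_fiberSum_eq_of_dft_eq {N P m : ℕ} [NeZero N] (hPN : P ∣ N) (hmP : 2 * m ≤ P)
    {u v : ZMod N → ℂ} {μu μv : ZMod N}
    (hu : SupportedOnInterval u μu m) (hv : SupportedOnInterval v μv m)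
    (huv : fiberSum hPN u = fiberSum hPN v) {ξ : ZMod N} (hξ : IsUnit ξ)
    (hdft : 𝓕 u ξ = 𝓕 v ξ) (hne : 𝓕 u ξ ≠ 0) : u = v := by
  have hv0 : v ≠ 0 := by
    rintro rfl
    exact hne (by rw [hdft, map_zero, Pi.zero_apply])
  obtain ⟨t, ht⟩ := exists_apply_add_eq_of_fiberSum_eq hPN hu hv hmP huv hv0
  obtain rfl : t = 0 := eq_zero_of_dft_comp_add_right_eq hξ hne (by rw [hdft, funext ht])
  simpa using (funext ht : (fun j ↦ u (j + 0)) = v)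

end ZMod

lemma perio_eq_fiberSum {J j : ℕ} (hj : j ≤ J) (x : ℕ → ℂ) {k : ℕ} (hk : k < 2 ^ j) :
    perio x J j k = ZMod.fiberSum (pow_dvd_pow 2 hj) (fun i : ZMod (2 ^ J) ↦ x i.val) k := by
  rw [perio, ← Nat.pow_div hj two_pos, ZMod.sum_range_add_mul_eq_fiberSum _ _ hk]

lemma dft_eq_dft_comp_val (N : ℕ) [NeZero N] (x : ℕ → ℂ) (k : ℕ) :
    dft N x k = 𝓕 (fun j : ZMod N ↦ x j.val) k := by
  rw [dft, ZMod.dft_apply, ← ZMod.sum_val_eq_sum_range]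
  refine sum_congr rfl fun j _ ↦ ?_
  have : -(j * k : ZMod N) = ((-(j.val * k : ℕ) : ℤ) : ZMod N) := by
    push_cast
    rw [ZMod.natCast_zmod_val]
  rw [smul_eq_mul, mul_comm, this, ZMod.stdAddChar_coe]
  push_cast
  ring_nf

lemma supportedOnInterval_comp_val {M : Type*} [AddCommMonoid M] {N m μ : ℕ} [NeZero N]
    {x : ℕ → M} (hx : ∀ k < N, (∀ r < m, k ≠ (μ + r) % N) → x k = 0) :
    ZMod.SupportedOnInterval (fun j : ZMod N ↦ x j.val) μ m := by
  intro j hj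
  by_contra! h
  refine hj (hx _ j.val_lt fun r hr he ↦ h r hr ?_)
  rw [← ZMod.natCast_zmod_val j, he, ZMod.natCast_mod, Nat.cast_add]

/-- A vector with support in a cyclic interval of length `m ≤ 2^L` is uniquely determined by
its `2^{L+1}`-periodization together with one nonzero odd-indexed Fourier coefficient. -/
theorem unique_from_perio_and_odd_coeff (J L m k₀ : ℕ) (hL : L + 1 < J) (hm : m ≤ 2 ^ L)
    (u v : ℕ → ℂ) (μu μv : ℕ)
    (hu : ∀ k < 2 ^ J, (∀ r < m, k ≠ (μu + r) % 2 ^ J) → u k = 0)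
    (hv : ∀ k < 2 ^ J, (∀ r < m, k ≠ (μv + r) % 2 ^ J) → v k = 0)
    (hper : ∀ k < 2 ^ (L + 1), perio u J (L + 1) k = perio v J (L + 1) k)
    (hdft : dft (2 ^ J) u (2 * k₀ + 1) = dft (2 ^ J) v (2 * k₀ + 1))
    (hne : dft (2 ^ J) u (2 * k₀ + 1) ≠ 0) :
    ∀ k < 2 ^ J, u k = v k := by
  have hPN : 2 ^ (L + 1) ∣ 2 ^ J := pow_dvd_pow 2 hL.le
  have hmP : 2 * m ≤ 2 ^ (L + 1) := by rw [pow_succ]; omega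
  have hξ : IsUnit ((2 * k₀ + 1 : ℕ) : ZMod (2 ^ J)) :=
    (ZMod.isUnit_iff_coprime _ _).2 ((Nat.coprime_two_right.2 (odd_two_mul_add_one k₀)).pow_right J)
  have hfib : ZMod.fiberSum hPN (fun j ↦ u j.val) = ZMod.fiberSum hPN (fun j ↦ v j.val) := by
    funext c
    rw [← ZMod.natCast_zmod_val c, ← perio_eq_fiberSum hL.le _ c.val_lt,
      ← perio_eq_fiberSum hL.le _ c.val_lt, hper _ c.val_lt]
  simp only [dft_eq_dft_comp_val] at hdft hne
  have huv := ZMod.eq_of_fiberSum_eq_of_dft_eq hPN hmP (supportedOnInterval_comp_val hu)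
    (supportedOnInterval_comp_val hv) hfib hξ hdft hne
  intro k hk
  simpa [ZMod.val_natCast_of_lt hk] using congrFun huv k
end

section
/- Let x ∈ ℂ^N, N = 2^J, have support contained in a cyclic interval of length m with m ≤ N/4. Then the vector of odd-indexed Fourier coefficients (x̂_{2k+1})_{k=0}^{N/2-1} has at most m-1 zero components; in particular, if x ≠ 0, there exists k₀ with x̂_{2k₀+1} ≠ 0. -/
/-!
Writing the support of `x` as the window `μ, μ + 1, …, μ + m - 1` (mod `N`), every Fourier
coefficient is `x̂_k = ω^{μk} · q(ω^k)`, where `ω = e^{-2πi/N}` and `q = ∑_{ℓ<m} x_{μ+ℓ} X^ℓ` is a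
nonzero polynomial of degree at most `m - 1`. The points `ω^{2k+1}`, `k < N/2`, are pairwise
distinct, so at most `m - 1` of them are roots of `q`; since `m - 1 < N/2`, some odd-indexed
coefficient survives.
-/

open Complex Polynomial Finset

lemma Polynomial.card_filter_eval_eq_zero_le_natDegree {R ι : Type*} [CommRing R] [IsDomain R]
    [DecidableEq R] {p : R[X]} (hp : p ≠ 0) (s : Finset ι) {f : ι → R} (hf : Set.InjOn f s) :
    #(s.filter fun i => p.eval (f i) = 0) ≤ p.natDegree := by
  rw [← card_image_of_injOn (hf.mono (filter_subset _ _))]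
  refine card_le_degree_of_subset_roots fun z hz => ?_
  obtain ⟨i, hi, rfl⟩ := mem_image.mp hz
  exact (mem_roots hp).mpr (mem_filter.mp hi).2

lemma Finset.sum_range_eq_sum_window {M : Type*} [AddCommMonoid M] {N m : ℕ} (μ : ℕ)
    (hmN : m ≤ N) {f : ℕ → M} (hf : ∀ k < N, (∀ r < m, k ≠ (μ + r) % N) → f k = 0) :
    ∑ j ∈ range N, f j = ∑ ℓ ∈ range m, f ((μ + ℓ) % N) := by
  classical
  have hinj : Set.InjOn (fun ℓ => (μ + ℓ) % N) (range m) := by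
    intro ℓ hℓ ℓ' hℓ' h
    have := Nat.ModEq.add_left_cancel' μ h
    rwa [Nat.ModEq, Nat.mod_eq_of_lt (by simp at hℓ; omega),
      Nat.mod_eq_of_lt (by simp at hℓ'; omega)] at this
  have hsub : (range m).image (fun ℓ => (μ + ℓ) % N) ⊆ range N := by
    intro j hj
    obtain ⟨ℓ, -, rfl⟩ := mem_image.mp hj
    exact mem_range.mpr (Nat.mod_lt _ (by simp at *; omega))
  rw [← sum_image hinj, sum_subset hsub]
  intro j hj hjw
  exact hf j (mem_range.mp hj) fun r hr hjr => hjw (mem_image.mpr ⟨r, mem_range.mpr hr, hjr.symm⟩)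

noncomputable def dftRoot (N : ℕ) : ℂ := exp (-(2 * Real.pi * I) / N)

lemma isPrimitiveRoot_dftRoot {N : ℕ} (hN : N ≠ 0) : IsPrimitiveRoot (dftRoot N) N := by
  rw [dftRoot, neg_div, exp_neg]
  exact (isPrimitiveRoot_exp N hN).inv

lemma dft_eq_sum_dftRoot_pow (N : ℕ) (x : ℕ → ℂ) (k : ℕ) :
    dft N x k = ∑ j ∈ range N, x j * dftRoot N ^ (j * k) := by
  refine sum_congr rfl fun j _ => ?_
  rw [dftRoot, ← exp_nat_mul]
  push_cast
  ring_nf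

noncomputable def windowPoly (x : ℕ → ℂ) (N μ m : ℕ) : ℂ[X] :=
  ∑ ℓ ∈ range m, C (x ((μ + ℓ) % N)) * X ^ ℓ

section windowPoly

variable (x : ℕ → ℂ) (N μ m : ℕ)

lemma coeff_windowPoly {r : ℕ} (hr : r < m) : (windowPoly x N μ m).coeff r = x ((μ + r) % N) := by
  simp [windowPoly, coeff_C_mul, coeff_X_pow, hr]

lemma eval_windowPoly (z : ℂ) :
    (windowPoly x N μ m).eval z = ∑ ℓ ∈ range m, x ((μ + ℓ) % N) * z ^ ℓ := by
  simp [windowPoly, eval_finsetSum]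

lemma natDegree_windowPoly_le : (windowPoly x N μ m).natDegree ≤ m - 1 :=
  natDegree_sum_le_of_forall_le _ _ fun ℓ hℓ =>
    (natDegree_C_mul_X_pow_le _ _).trans (by simp at hℓ; omega)

variable {x N μ m}

lemma windowPoly_ne_zero (hsupp : ∀ k < N, (∀ r < m, k ≠ (μ + r) % N) → x k = 0)
    (hx : ∃ k < N, x k ≠ 0) : windowPoly x N μ m ≠ 0 := by
  obtain ⟨k, hkN, hk⟩ := hx
  obtain ⟨r, hr, rfl⟩ : ∃ r < m, k = (μ + r) % N := by
    by_contra! h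
    exact hk (hsupp k hkN h)
  intro h0
  exact hk (by rw [← coeff_windowPoly x N μ m hr, h0, coeff_zero])

lemma dft_eq_mul_eval_windowPoly (hN : N ≠ 0) (hmN : m ≤ N)
    (hsupp : ∀ k < N, (∀ r < m, k ≠ (μ + r) % N) → x k = 0) (k : ℕ) :
    dft N x k = dftRoot N ^ (μ * k) * (windowPoly x N μ m).eval (dftRoot N ^ k) := by
  have hω := isPrimitiveRoot_dftRoot hN
  rw [dft_eq_sum_dftRoot_pow, sum_range_eq_sum_window μ hmN fun j hj hjw => by
    rw [hsupp j hj hjw, zero_mul], eval_windowPoly, mul_sum]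
  refine sum_congr rfl fun ℓ _ => ?_
  have hmod : dftRoot N ^ ((μ + ℓ) % N * k) = dftRoot N ^ ((μ + ℓ) * k) := by
    have := pow_mod_orderOf (dftRoot N) (μ + ℓ)
    rw [← hω.eq_orderOf] at this
    rw [pow_mul, this, ← pow_mul]
  rw [hmod, add_mul, pow_add, mul_comm ℓ k, pow_mul]
  ring

end windowPoly

/-- For a nonzero `x ∈ ℂ^{2^J}` supported in a cyclic interval of length `m` with
`4m ≤ N`, at most `m-1` of the odd-indexed Fourier coefficients vanish; in particular
a nonzero odd-indexed Fourier coefficient exists. -/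
theorem odd_coeff_nonzero_exists (J m μ : ℕ) (x : ℕ → ℂ) (hm : 4 * m ≤ 2 ^ J)
    (hsupp : ∀ k < 2 ^ J, (∀ r < m, k ≠ (μ + r) % 2 ^ J) → x k = 0)
    (hx : ∃ k < 2 ^ J, x k ≠ 0) :
    ((Finset.range (2 ^ J / 2)).filter (fun k => dft (2 ^ J) x (2 * k + 1) = 0)).card ≤ m - 1 ∧
    ∃ k₀ < 2 ^ J / 2, dft (2 ^ J) x (2 * k₀ + 1) ≠ 0 := by
  have hN : 2 ^ J ≠ 0 := by positivity
  have hω := isPrimitiveRoot_dftRoot hN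
  have hq := windowPoly_ne_zero hsupp hx
  have hm0 : m ≠ 0 := by
    rintro rfl
    exact hq (by simp [windowPoly])
  have hmN : m ≤ 2 ^ J := by omega
  have hcard : #((range (2 ^ J / 2)).filter fun k => dft (2 ^ J) x (2 * k + 1) = 0) ≤ m - 1 :=
    calc _ = #((range (2 ^ J / 2)).filter
          fun k => (windowPoly x (2 ^ J) μ m).eval (dftRoot (2 ^ J) ^ (2 * k + 1)) = 0) := by
          simp only [dft_eq_mul_eval_windowPoly hN hmN hsupp, mul_eq_zero,
            pow_eq_zero_iff', hω.ne_zero hN, false_and, false_or]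
      _ ≤ (windowPoly x (2 ^ J) μ m).natDegree :=
          card_filter_eval_eq_zero_le_natDegree hq _ fun k hk k' hk' h => by
            simp only [coe_range, Set.mem_Iio] at hk hk'
            have := hω.pow_inj (by omega) (by omega) h
            omega
      _ ≤ m - 1 := natDegree_windowPoly_le x _ μ m
  refine ⟨hcard, ?_⟩
  by_contra! h
  rw [filter_true_of_mem fun k hk => h k (mem_range.mp hk), card_range] at hcard
  omega
end

section
/- Let x ∈ ℂ^N, N = 2^J, have support contained in a cyclic interval of length m ≤ 2^L with L < J-1. For each κ ∈ {0,...,2^{J-L-1}-1}, define ẑ^(κ) = (x̂_{2^{J-L-1}k + κ})_{k=0}^{2^{L+1}-1} and z^(κ) = F_{2^{L+1}}^{-1} ẑ^(κ). Then |z^(κ)_ℓ| = |x^(L+1)_ℓ| for all ℓ = 0,...,2^{L+1}-1, where x^(L+1) is the 2^{L+1}-periodization of x. -/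
/-- Inverse DFT of length `2^{L+1}` applied to the `κ`-shifted subsampling
`(x̂_{2^{J-L-1}k+κ})_{k<2^{L+1}}` of the DFT of `x ∈ ℂ^{2^J}`. -/
noncomputable def zvec (J L : ℕ) (x : ℕ → ℂ) (κ ℓ : ℕ) : ℂ :=
  (2 ^ (L + 1) : ℂ)⁻¹ * ∑ k ∈ Finset.range (2 ^ (L + 1)),
    dft (2 ^ J) x (2 ^ (J - L - 1) * k + κ) *
      Complex.exp (2 * Real.pi * Complex.I * ((k : ℂ) * ℓ) / 2 ^ (L + 1))

/-!
With `N = M * Q`, subsampling `x̂` at the frequencies `Q k + κ` and inverting the length-`M`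
DFT aliases `x` onto residues mod `M`: by orthogonality of the `M`-th roots of unity,
`z_ℓ = ∑_{t < Q} x_{ℓ + M t} · e^{-2πi (ℓ + M t) κ / N}`, a periodization with unimodular
phases. A support of cyclic length `m ≤ M` meets each residue class mod `M` at most once, so
only one term survives and the phases do not change the modulus.
-/
open Complex Finset

theorem sum_range_exp_two_pi_I_mul_div {M : ℕ} (hM : 0 < M) (d : ℤ) :
    ∑ k ∈ range M, exp (2 * Real.pi * I * (k * d) / M) = if (M : ℤ) ∣ d then (M : ℂ) else 0 := by
  set ζ := exp (2 * Real.pi * I / M)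
  have hζ : IsPrimitiveRoot ζ M := isPrimitiveRoot_exp M hM.ne'
  have hterm (k : ℕ) : exp (2 * Real.pi * I * (k * d) / M) = (ζ ^ d) ^ k := by
    rw [← exp_int_mul, ← exp_nat_mul]
    ring_nf
  simp_rw [hterm]
  split_ifs with hd
  · simp [(hζ.zpow_eq_one_iff_dvd d).2 hd]
  · have hpow : (ζ ^ d) ^ M = 1 := by
      rw [← zpow_natCast, ← zpow_mul, mul_comm d, zpow_mul, zpow_natCast, hζ.pow_eq_one, one_zpow]
    rw [geom_sum_eq (mt (hζ.zpow_eq_one_iff_dvd d).1 hd), hpow, sub_self, zero_div]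

theorem sum_range_mul_eq_sum_sum {β : Type*} [AddCommMonoid β] (M Q : ℕ) (f : ℕ → β) :
    ∑ j ∈ range (M * Q), f j = ∑ t ∈ range Q, ∑ s ∈ range M, f (s + M * t) := by
  induction Q with
  | zero => simp
  | succ q ih =>
    rw [sum_range_succ, ← ih, Nat.mul_succ, sum_range_add]
    simp only [add_comm]

theorem inv_mul_sum_dft_mul_exp {M Q : ℕ} (hQ : 0 < Q) (x : ℕ → ℂ) (κ : ℕ) {ℓ : ℕ}
    (hℓ : ℓ < M) :
    (M : ℂ)⁻¹ * ∑ k ∈ range M, dft (M * Q) x (Q * k + κ) * exp (2 * Real.pi * I * (k * ℓ) / M)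
      = ∑ t ∈ range Q,
          x (ℓ + M * t) * exp (-2 * Real.pi * I * (((ℓ + M * t : ℕ) : ℂ) * κ) / (M * Q : ℕ)) := by
  have hM : 0 < M := by omega
  have hMC : (M : ℂ) ≠ 0 := by exact_mod_cast hM.ne'
  have hQC : (Q : ℂ) ≠ 0 := by exact_mod_cast hQ.ne'
  set phase : ℕ → ℂ := fun j ↦ exp (-2 * Real.pi * I * ((j : ℂ) * κ) / (M * Q : ℕ))
  have hphase (j k : ℕ) :
      exp (-2 * Real.pi * I * ((j : ℂ) * (Q * k + κ : ℕ)) / (M * Q : ℕ)) *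
        exp (2 * Real.pi * I * (k * ℓ) / M)
      = phase j * exp (2 * Real.pi * I * (k * ((ℓ : ℤ) - j : ℤ)) / M) := by
    simp only [phase, ← exp_add]
    congr 1
    push_cast
    field_simp
    ring
  have hdvd {s : ℕ} (hs : s < M) (t : ℕ) : (M : ℤ) ∣ (ℓ : ℤ) - (s + M * t : ℕ) ↔ s = ℓ := by
    rw [← Nat.modEq_iff_dvd, Nat.ModEq, Nat.add_mul_mod_self_left, Nat.mod_eq_of_lt hs,
      Nat.mod_eq_of_lt hℓ]
  calc (M : ℂ)⁻¹ * ∑ k ∈ range M, dft (M * Q) x (Q * k + κ) * exp (2 * Real.pi * I * (k * ℓ) / M)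
      = (M : ℂ)⁻¹ * ∑ j ∈ range (M * Q), x j * phase j *
          ∑ k ∈ range M, exp (2 * Real.pi * I * (k * ((ℓ : ℤ) - j : ℤ)) / M) := by
        congr 1
        simp_rw [dft, sum_mul, mul_sum]
        rw [sum_comm]
        refine sum_congr rfl fun j _ ↦ sum_congr rfl fun k _ ↦ ?_
        rw [mul_assoc, hphase]
        ring
    _ = (M : ℂ)⁻¹ * ∑ t ∈ range Q, ∑ s ∈ range M,
          x (s + M * t) * phase (s + M * t) * if s = ℓ then (M : ℂ) else 0 := by
        simp_rw [sum_range_mul_eq_sum_sum, sum_range_exp_two_pi_I_mul_div hM]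
        congr 1
        refine sum_congr rfl fun t _ ↦ sum_congr rfl fun s hs ↦ ?_
        simp only [hdvd (mem_range.1 hs)]
    _ = _ := by
        simp only [mul_ite, mul_zero, sum_ite_eq', mem_range.2 hℓ, if_true, mul_sum]
        exact sum_congr rfl fun t _ ↦ by rw [mul_comm, mul_inv_cancel_right₀ hMC]

theorem norm_sum_mul_eq_norm_sum {ι 𝕜 : Type*} [NormedDivisionRing 𝕜] {s : Finset ι}
    {f g : ι → 𝕜} (hg : ∀ i ∈ s, ‖g i‖ = 1)
    (hf : ∀ i ∈ s, ∀ j ∈ s, f i ≠ 0 → f j ≠ 0 → i = j) :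
    ‖∑ i ∈ s, f i * g i‖ = ‖∑ i ∈ s, f i‖ := by
  by_cases hzero : ∀ i ∈ s, f i = 0
  · rw [sum_eq_zero hzero, sum_eq_zero fun i hi ↦ by rw [hzero i hi, zero_mul]]
  push Not at hzero
  obtain ⟨i₀, hi₀, hfi₀⟩ := hzero
  have hother : ∀ j ∈ s, j ≠ i₀ → f j = 0 := fun j hj hne ↦
    not_not.1 fun hfj ↦ hne (hf j hj i₀ hi₀ hfj hfi₀)
  rw [sum_eq_single_of_mem i₀ hi₀ fun j hj hne ↦ by rw [hother j hj hne, zero_mul],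
    sum_eq_single_of_mem i₀ hi₀ hother, norm_mul, hg i₀ hi₀, mul_one]

theorem norm_exp_neg_two_pi_I_mul_div (a b : ℕ) : ‖exp (-2 * Real.pi * I * a / b)‖ = 1 := by
  simp [norm_exp]

theorem eq_of_add_mul_eq_add_mod {M Q ℓ μ r₁ r₂ t₁ t₂ : ℕ} (hr₁ : r₁ < M) (hr₂ : r₂ < M)
    (h₁ : ℓ + M * t₁ = (μ + r₁) % (M * Q)) (h₂ : ℓ + M * t₂ = (μ + r₂) % (M * Q)) :
    t₁ = t₂ := by
  have hmodM {t r : ℕ} (h : ℓ + M * t = (μ + r) % (M * Q)) : ℓ ≡ μ + r [MOD M] := by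
    rw [Nat.ModEq, ← Nat.mod_mod_of_dvd (μ + r) (dvd_mul_right M Q), ← h, Nat.add_mul_mod_self_left]
  have hr : r₁ = r₂ :=
    (((hmodM h₁).symm.trans (hmodM h₂)).add_left_cancel' μ).eq_of_lt_of_lt hr₁ hr₂
  subst hr
  exact Nat.eq_of_mul_eq_mul_left (by omega) (Nat.add_left_cancel (h₁.trans h₂.symm))

theorem eq_of_ne_zero_of_support_subset_interval {α : Type*} [Zero α] {M Q m μ ℓ t₁ t₂ : ℕ}
    {x : ℕ → α} (hm : m ≤ M) (hℓ : ℓ < M)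
    (hsupp : ∀ k < M * Q, (∀ r < m, k ≠ (μ + r) % (M * Q)) → x k = 0)
    (ht₁ : t₁ < Q) (ht₂ : t₂ < Q) (h₁ : x (ℓ + M * t₁) ≠ 0) (h₂ : x (ℓ + M * t₂) ≠ 0) :
    t₁ = t₂ := by
  have hmem {t : ℕ} (ht : t < Q) (hx : x (ℓ + M * t) ≠ 0) :
      ∃ r < M, ℓ + M * t = (μ + r) % (M * Q) := by
    have hlt : ℓ + M * t < M * Q := by nlinarith
    by_contra! h
    exact hx (hsupp _ hlt fun r hr ↦ h r (hr.trans_le hm))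
  obtain ⟨r₁, hr₁, he₁⟩ := hmem ht₁ h₁
  obtain ⟨r₂, hr₂, he₂⟩ := hmem ht₂ h₂
  exact eq_of_add_mul_eq_add_mod hr₁ hr₂ he₁ he₂

theorem zvec_abs_eq_perio_general (J L m μ κ : ℕ) (hL : L + 1 < J) (hm : m ≤ 2 ^ L)
    (x : ℕ → ℂ)
    (hsupp : ∀ k < 2 ^ J, (∀ r < m, k ≠ (μ + r) % 2 ^ J) → x k = 0) :
    ∀ ℓ < 2 ^ (L + 1),
      ‖zvec J L x κ ℓ‖ = ‖perio x J (L + 1) ℓ‖ := by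
  intro ℓ hℓ
  have hN : 2 ^ J = 2 ^ (L + 1) * 2 ^ (J - L - 1) := by rw [← pow_add]; congr 1; omega
  have hzvec : zvec J L x κ ℓ = ∑ t ∈ range (2 ^ (J - L - 1)), x (ℓ + 2 ^ (L + 1) * t) *
      exp (-2 * Real.pi * I * (((ℓ + 2 ^ (L + 1) * t : ℕ) : ℂ) * κ) / (2 ^ J : ℕ)) := by
    rw [zvec, hN]
    exact_mod_cast inv_mul_sum_dft_mul_exp (by positivity) x κ hℓ
  rw [hzvec, perio, show J - (L + 1) = J - L - 1 by omega]
  apply norm_sum_mul_eq_norm_sum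
  · intro t _
    rw [← Nat.cast_mul]
    exact norm_exp_neg_two_pi_I_mul_div _ _
  · intro t₁ ht₁ t₂ ht₂ h₁ h₂
    have hmM : m ≤ 2 ^ (L + 1) := hm.trans (Nat.pow_le_pow_right two_pos L.le_succ)
    exact eq_of_ne_zero_of_support_subset_interval hmM hℓ (hN ▸ hsupp)
      (mem_range.1 ht₁) (mem_range.1 ht₂) h₁ h₂

/-- For `x` supported in a cyclic interval of length `m ≤ 2^L`, each shifted subsampled
inverse DFT `z^{(κ)}` satisfies `|z^{(κ)}_ℓ| = |x^{(L+1)}_ℓ|`. -/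
theorem zvec_abs_eq_perio (J L m μ κ : ℕ) (hL : L + 1 < J) (hm : m ≤ 2 ^ L)
    (hκ : κ < 2 ^ (J - L - 1)) (x : ℕ → ℂ)
    (hsupp : ∀ k < 2 ^ J, (∀ r < m, k ≠ (μ + r) % 2 ^ J) → x k = 0) :
    ∀ ℓ < 2 ^ (L + 1),
      ‖zvec J L x κ ℓ‖ = ‖perio x J (L + 1) ℓ‖ :=
  zvec_abs_eq_perio_general J L m μ κ hL hm x hsupp
end

section
/- Let x ∈ ℂ^N, N = 2^J, have support contained in a cyclic interval of length m ≤ 2^L, and let L+1 ≤ j ≤ J-1. If x^(j) has support in {(μ^(j)+r) mod 2^j : r = 0,...,m-1}, then x^(j+1) has support in {(μ^(j)+r) mod 2^{j+1} : r=0,...,m-1} or in {(μ^(j)+2^j+r) mod 2^{j+1} : r=0,...,m-1}; in these respective cases x^(j+1)_{(μ^(j)+ℓ) mod 2^{j+1}} = x^(j)_{(μ^(j)+ℓ) mod 2^j} or x^(j+1)_{(μ^(j)+2^j+ℓ) mod 2^{j+1}} = x^(j)_{(μ^(j)+ℓ) mod 2^j} for ℓ = 0,...,m-1. -/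
def SupportedOnArc {α : Type*} [Zero α] (N a m : ℕ) (f : ℕ → α) : Prop :=
  ∀ k < N, (∀ r < m, k ≠ (a + r) % N) → f k = 0

theorem mod_two_mul_cases (t P : ℕ) :
    (t % (2 * P) = t % P ∧ (t + P) % (2 * P) = t % P + P) ∨
      (t % (2 * P) = t % P + P ∧ (t + P) % (2 * P) = t % P) := by
  rcases P.eq_zero_or_pos with rfl | hP
  · simp
  have hshift : (t + P) / P = t / P + 1 := Nat.add_div_right t hP
  rw [mul_comm, Nat.mod_mul, Nat.mod_mul, Nat.add_mod_right, hshift]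
  rcases Nat.mod_two_eq_zero_or_one (t / P) with h | h
  · left; simp [Nat.add_mod, h]
  · right; simp [Nat.add_mod, h]

theorem eq_mod_two_mul_or_eq_add_mod_two_mul {k t P : ℕ} (hk : k < 2 * P)
    (hkt : k % P = t % P) : k = t % (2 * P) ∨ k = (t + P) % (2 * P) := by
  have hk' : k % (2 * P) = k := Nat.mod_eq_of_lt hk
  rcases mod_two_mul_cases k P with ⟨h₁, -⟩ | ⟨h₁, -⟩ <;>
    rcases mod_two_mul_cases t P with ⟨h₂, h₃⟩ | ⟨h₂, h₃⟩ <;> omega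

theorem false_of_modEq_arc_of_modEq_antipodal_arc {P m a b r₀ r₁ s₀ s₁ : ℕ} (hm : 2 * m ≤ P)
    (hr₀ : r₀ < m) (hr₁ : r₁ < m) (hs₀ : s₀ < m) (hs₁ : s₁ < m)
    (h₀ : a + r₀ ≡ b + s₀ [MOD 2 * P]) (h₁ : a + P + r₁ ≡ b + s₁ [MOD 2 * P]) : False := by
  have hsum := h₀.add h₁.symm
  rw [show a + r₀ + (b + s₁) = (a + b) + (r₀ + s₁) by ring,
    show b + s₀ + (a + P + r₁) = (a + b) + (s₀ + P + r₁) by ring] at hsum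
  have := (Nat.ModEq.add_left_cancel' _ hsum).eq_of_lt_of_lt (by omega) (by omega)
  omega

namespace SupportedOnArc

variable {α : Type*} [Zero α] {N a m : ℕ} {f : ℕ → α}

theorem exists_eq_of_ne_zero (hf : SupportedOnArc N a m f) {k : ℕ} (hk : k < N)
    (hfk : f k ≠ 0) : ∃ r < m, k = (a + r) % N := by
  by_contra! h
  exact hfk (hf k hk h)

theorem of_modEq {b : ℕ} (hab : a ≡ b [MOD N]) (hf : SupportedOnArc N a m f) :
    SupportedOnArc N b m f :=
  fun k hk hkb ↦ hf k hk fun r hr ↦ (hab.add_right r).symm ▸ hkb r hr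

theorem eq_zero_or_eq_zero_add {M : ℕ} (hm : m ≤ M) (hf : SupportedOnArc (2 * M) a m f) {k : ℕ}
    (hk : k < 2 * M) : f k = 0 ∨ f ((k + M) % (2 * M)) = 0 := by
  by_contra! h
  obtain ⟨s₀, hs₀, h₀⟩ := hf.exists_eq_of_ne_zero hk h.1
  obtain ⟨s₁, hs₁, h₁⟩ := hf.exists_eq_of_ne_zero (Nat.mod_lt _ (by omega)) h.2
  have hmod : a + (s₀ + M) ≡ a + s₁ [MOD 2 * M] := by
    rw [← add_assoc, Nat.ModEq, ← h₁, h₀, Nat.mod_add_mod]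
  have := (Nat.ModEq.add_left_cancel' a hmod).eq_of_lt_of_lt (by omega) (by omega)
  omega

end SupportedOnArc

section Lift

variable {α : Type*} [AddZeroClass α] {P m μ ν : ℕ} {y z : ℕ → α}

theorem SupportedOnArc.lift_of_vanishing (hm : m ≤ P)
    (hsplit : ∀ t, z (t % P) = y (t % (2 * P)) + y ((t + P) % (2 * P)))
    (hy : SupportedOnArc (2 * P) μ m y) (hz : SupportedOnArc P ν m z)
    (hvan : ∀ r < m, y ((ν + r) % (2 * P)) = 0) :
    SupportedOnArc (2 * P) (ν + P) m y ∧
      ∀ ℓ < m, y ((ν + P + ℓ) % (2 * P)) = z ((ν + ℓ) % P) := by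
  refine ⟨fun k hk hkout ↦ ?_, fun ℓ hℓ ↦ ?_⟩
  · by_cases hkin : ∃ r < m, k = (ν + r) % (2 * P)
    · obtain ⟨r, hr, rfl⟩ := hkin
      exact hvan r hr
    push Not at hkin
    have hzk : z (k % P) = 0 := by
      refine hz _ (Nat.mod_lt _ (by omega)) fun r hr hkr ↦ ?_
      rcases eq_mod_two_mul_or_eq_add_mod_two_mul hk hkr with h | h
      · exact hkin r hr h
      · exact hkout r hr (by rwa [add_right_comm])
    have hfold := hsplit k
    rw [hzk, Nat.mod_eq_of_lt hk] at hfold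
    rcases hy.eq_zero_or_eq_zero_add hm hk with h | h
    · exact h
    · rwa [h, add_zero, eq_comm] at hfold
  · rw [hsplit, hvan ℓ hℓ, zero_add, add_right_comm]

theorem SupportedOnArc.lift (hm : 2 * m ≤ P)
    (hsplit : ∀ t, z (t % P) = y (t % (2 * P)) + y ((t + P) % (2 * P)))
    (hy : SupportedOnArc (2 * P) μ m y) (hz : SupportedOnArc P ν m z) :
    (SupportedOnArc (2 * P) ν m y ∧ ∀ ℓ < m, y ((ν + ℓ) % (2 * P)) = z ((ν + ℓ) % P)) ∨
      (SupportedOnArc (2 * P) (ν + P) m y ∧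
        ∀ ℓ < m, y ((ν + P + ℓ) % (2 * P)) = z ((ν + ℓ) % P)) := by
  by_cases hvan : ∀ r < m, y ((ν + P + r) % (2 * P)) = 0
  · have hPP : ν + P + P ≡ ν [MOD 2 * P] := by simp [Nat.ModEq, add_assoc, ← two_mul]
    have hνP : ν ≡ ν + P [MOD P] := by simp [Nat.ModEq]
    obtain ⟨hsupp, hval⟩ := lift_of_vanishing (by omega) hsplit hy (hz.of_modEq hνP) hvan
    refine .inl ⟨hsupp.of_modEq hPP, fun ℓ hℓ ↦ ?_⟩
    rw [← hPP.add_right ℓ, hval ℓ hℓ, ← hνP.add_right ℓ]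
  · push Not at hvan
    obtain ⟨r₁, hr₁, hyr₁⟩ := hvan
    refine .inr (lift_of_vanishing (by omega) hsplit hy hz fun r₀ hr₀ ↦ ?_)
    by_contra hyr₀
    obtain ⟨s₀, hs₀, h₀⟩ := hy.exists_eq_of_ne_zero (Nat.mod_lt _ (by omega)) hyr₀
    obtain ⟨s₁, hs₁, h₁⟩ := hy.exists_eq_of_ne_zero (Nat.mod_lt _ (by omega)) hyr₁
    exact false_of_modEq_arc_of_modEq_antipodal_arc hm hr₀ hr₁ hs₀ hs₁ h₀ h₁

end Lift

theorem sum_range_two_mul {M : Type*} [AddCommMonoid M] (f : ℕ → M) (n : ℕ) :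
    ∑ i ∈ Finset.range (2 * n), f i =
      ∑ i ∈ Finset.range n, f (2 * i) + ∑ i ∈ Finset.range n, f (2 * i + 1) := by
  induction n with
  | zero => simp
  | succ n ih =>
    rw [mul_add_one, Finset.sum_range_succ, Finset.sum_range_succ, ih,
      Finset.sum_range_succ, Finset.sum_range_succ]
    abel

theorem perio_eq_perio_succ_add {J j : ℕ} (hj : j + 1 ≤ J) (x : ℕ → ℂ) (k : ℕ) :
    perio x J j k = perio x J (j + 1) k + perio x J (j + 1) (k + 2 ^ j) := by
  rw [perio, perio, perio, show J - j = J - (j + 1) + 1 by omega, pow_succ', sum_range_two_mul]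
  congr 1 <;> refine Finset.sum_congr rfl fun i _ ↦ congrArg x ?_ <;> ring

theorem perio_mod_eq_add {J j : ℕ} (hj : j + 1 ≤ J) (x : ℕ → ℂ) (t : ℕ) :
    perio x J j (t % 2 ^ j) =
      perio x J (j + 1) (t % (2 * 2 ^ j)) + perio x J (j + 1) ((t + 2 ^ j) % (2 * 2 ^ j)) := by
  rw [perio_eq_perio_succ_add hj]
  rcases mod_two_mul_cases t (2 ^ j) with ⟨h₁, h₂⟩ | ⟨h₁, h₂⟩ <;> rw [h₁, h₂]
  exact add_comm _ _

theorem SupportedOnArc.perio {J j m μ : ℕ} {x : ℕ → ℂ} (hj : j ≤ J)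
    (hx : SupportedOnArc (2 ^ J) μ m x) : SupportedOnArc (2 ^ j) μ m (perio x J j) := by
  intro k hk hkout
  refine Finset.sum_eq_zero fun ℓ hℓ ↦ hx _ ?_ fun r hr hkr ↦ hkout r hr ?_
  · have hlt : ℓ + 1 ≤ 2 ^ (J - j) := Finset.mem_range.mp hℓ
    calc k + 2 ^ j * ℓ < 2 ^ j * (ℓ + 1) := by rw [mul_add_one]; omega
      _ ≤ 2 ^ j * 2 ^ (J - j) := Nat.mul_le_mul_left _ hlt
      _ = 2 ^ J := by rw [← pow_add, Nat.add_sub_cancel' hj]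
  · have := congrArg (· % 2 ^ j) hkr
    simpa [Nat.mod_eq_of_lt hk, Nat.mod_mod_of_dvd _ (pow_dvd_pow 2 hj)] using this

/-- If `x^{(j)}` is supported in the cyclic interval starting at `μ^{(j)}` of length `m`,
then `x^{(j+1)}` is supported in the corresponding interval starting at `μ^{(j)}` or at
`μ^{(j)} + 2^j`, with matching values. -/
theorem perio_support_lift (J L j m μ μj : ℕ) (hm : m ≤ 2 ^ L) (hj1 : L + 1 ≤ j)
    (hj2 : j + 1 ≤ J) (x : ℕ → ℂ)
    (hsupp : ∀ k < 2 ^ J, (∀ r < m, k ≠ (μ + r) % 2 ^ J) → x k = 0)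
    (hsuppj : ∀ k < 2 ^ j, (∀ r < m, k ≠ (μj + r) % 2 ^ j) → perio x J j k = 0) :
    ((∀ k < 2 ^ (j + 1), (∀ r < m, k ≠ (μj + r) % 2 ^ (j + 1)) → perio x J (j + 1) k = 0) ∧
      ∀ ℓ < m, perio x J (j + 1) ((μj + ℓ) % 2 ^ (j + 1)) = perio x J j ((μj + ℓ) % 2 ^ j)) ∨
    ((∀ k < 2 ^ (j + 1),
        (∀ r < m, k ≠ (μj + 2 ^ j + r) % 2 ^ (j + 1)) → perio x J (j + 1) k = 0) ∧
      ∀ ℓ < m,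
        perio x J (j + 1) ((μj + 2 ^ j + ℓ) % 2 ^ (j + 1)) =
          perio x J j ((μj + ℓ) % 2 ^ j)) := by
  have hmj : 2 * m ≤ 2 ^ j :=
    calc 2 * m ≤ 2 ^ (L + 1) := by rw [pow_succ']; omega
      _ ≤ 2 ^ j := Nat.pow_le_pow_right two_pos hj1
  have hsupp' : SupportedOnArc (2 ^ (j + 1)) μ m (perio x J (j + 1)) :=
    SupportedOnArc.perio hj2 hsupp
  rw [pow_succ'] at hsupp' ⊢
  exact hsupp'.lift hmj (perio_mod_eq_add hj2 x) hsuppj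
end

section
/- Let x ∈ ℂ^N, N = 2^J, have support contained in a cyclic interval of length m ≤ 2^L with L+1 ≤ j ≤ J-1. Then the periodization x^(j+1) is uniquely determined by x^(j) together with one nonzero component of the vector (x̂_{2^{J-j-1}(2k+1)})_{k=0}^{2^j-1}. Concretely: if u, v ∈ ℂ^{2^{j+1}} both have support in a cyclic interval of length m ≤ 2^{j-1}, have the same 2^j-periodization, and satisfy (F_{2^{j+1}} u)_{2k₀+1} = (F_{2^{j+1}} v)_{2k₀+1} ≠ 0 for some k₀, then u = v. -/
/-! Since the support of `u` has length at most `2^(j-1)`, each pair `u k, u (k + 2^j)` has at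
most one nonzero entry, so equal `2^j`-periodizations force each pair of `v` to be that of `u`
or its swap. Supports this short cannot make one nonzero pair agree and another swap, so `v` is
either `u` or its cyclic shift by `2^j`; the shift flips the sign of every odd-indexed DFT
coefficient, which a common nonzero coefficient rules out. -/

open Complex
open scoped Real

def cyclicInterval (N : ℕ) (μ : ZMod N) (m : ℕ) : Set (ZMod N) := {z | ∃ r < m, z = μ + r}

def IsSupportedIn {M : Type*} [Zero M] {N : ℕ} (x : ℕ → M) (S : Set (ZMod N)) : Prop :=
  ∀ k < N, x k ≠ 0 → (k : ZMod N) ∈ S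

theorem isSupportedIn_cyclicInterval {M : Type*} [Zero M] {N m μ : ℕ} {x : ℕ → M}
    (hx : ∀ k < N, (∀ r < m, k ≠ (μ + r) % N) → x k = 0) :
    IsSupportedIn x (cyclicInterval N μ m) := by
  intro k hk hxk
  by_contra hmem
  refine hxk (hx k hk fun r hr hkr => hmem ⟨r, hr, ?_⟩)
  rw [hkr, ZMod.natCast_mod]
  push_cast
  rfl

theorem add_half_notMem_cyclicInterval {h m : ℕ} (hm : 2 * m ≤ h + 1) {μ ν a b : ZMod (2 * h)}
    (ha : a ∈ cyclicInterval (2 * h) μ m) (hb : b ∈ cyclicInterval (2 * h) μ m)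
    (ha' : a ∈ cyclicInterval (2 * h) ν m) : b + h ∉ cyclicInterval (2 * h) ν m := by
  rintro ⟨s', hs', hbs'⟩
  obtain ⟨r, hr, rfl⟩ := ha
  obtain ⟨s, hs, rfl⟩ := hb
  obtain ⟨r', hr', har'⟩ := ha'
  -- `|(s' - r') - (s - r)| ≤ 2 * (m - 1) < h`, so it is not congruent to `h` modulo `2 * h`
  have hmod : ((h : ℤ) : ZMod (2 * h)) = (((s' : ℤ) - r' - (s - r) : ℤ) : ZMod (2 * h)) := by
    push_cast
    linear_combination hbs' - har'
  rw [ZMod.intCast_eq_intCast_iff_dvd_sub] at hmod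
  have := Int.eq_zero_of_abs_lt_dvd hmod (abs_lt.mpr ⟨by omega, by omega⟩)
  omega

theorem eq_and_eq_or_eq_and_eq_of_add_eq_add {M : Type*} [AddMonoid M] {a b c d : M}
    (h : a + b = c + d) (hab : a = 0 ∨ b = 0) (hcd : c = 0 ∨ d = 0) :
    (a = c ∧ b = d) ∨ (c = b ∧ d = a) := by
  rcases hab with rfl | rfl <;> rcases hcd with rfl | rfl <;> simp_all

section Lift

variable {h m : ℕ} {μ ν : ZMod (2 * h)} {u v : ℕ → ℂ}

theorem eq_zero_or_eq_zero_add_half (hm : 2 * m ≤ h + 1)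
    (hu : IsSupportedIn u (cyclicInterval (2 * h) μ m))
    {k : ℕ} (hk : k < h) : u k = 0 ∨ u (k + h) = 0 := by
  by_contra! H
  have hk' := hu k (by omega) H.1
  refine add_half_notMem_cyclicInterval hm hk' hk' hk' ?_
  exact_mod_cast hu (k + h) (by omega) H.2

theorem eq_zero_of_overlap_shifted (hm : 2 * m ≤ h + 1)
    (hu : IsSupportedIn u (cyclicInterval (2 * h) μ m))
    (hv : IsSupportedIn v (cyclicInterval (2 * h) ν m))
    {a b b' : ℕ} (hb : b < 2 * h) (hb' : b' < 2 * h) (hbb' : (b' : ZMod (2 * h)) = b + h)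
    (hub : u b ≠ 0) (hvb' : v b' ≠ 0) (ha : a < 2 * h) (hua : u a ≠ 0) : v a = 0 := by
  by_contra hva
  exact add_half_notMem_cyclicInterval hm (hu a ha hua) (hu b hb hub) (hv a ha hva)
    (hbb' ▸ hv b' hb' hvb')

theorem eq_or_swap_of_periodization_eq (hm : 2 * m ≤ h + 1)
    (hu : IsSupportedIn u (cyclicInterval (2 * h) μ m))
    (hv : IsSupportedIn v (cyclicInterval (2 * h) ν m))
    (hper : ∀ k < h, u k + u (k + h) = v k + v (k + h)) :
    (∀ k < 2 * h, u k = v k) ∨ ∀ k < h, v k = u (k + h) ∧ v (k + h) = u k := by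
  have hpair (k : ℕ) (hk : k < h) := eq_and_eq_or_eq_and_eq_of_add_eq_add (hper k hk)
    (eq_zero_or_eq_zero_add_half hm hu hk) (eq_zero_or_eq_zero_add_half hm hv hk)
  by_cases hsame : ∀ k < h, u k = v k ∧ u (k + h) = v (k + h)
  · left
    intro k hk
    obtain hk | ⟨k, rfl⟩ : k < h ∨ ∃ k', k = k' + h :=
      (lt_or_ge k h).imp_right fun hkh => ⟨k - h, by omega⟩
    exacts [(hsame k hk).1, (hsame k (by omega)).2]
  right
  push Not at hsame
  obtain ⟨k₁, hk₁, hne₁⟩ := hsame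
  obtain ⟨hv₁, hv₁'⟩ := (hpair k₁ hk₁).resolve_left fun ⟨h₁, h₂⟩ => hne₁ h₁ h₂
  obtain ⟨b, b', hb, hb', hbb', hub, hvb'⟩ :
      ∃ b b', b < 2 * h ∧ b' < 2 * h ∧ (b' : ZMod (2 * h)) = b + h ∧ u b ≠ 0 ∧ v b' ≠ 0 := by
    by_cases hu₁ : u k₁ = 0
    · have hu₁' : u (k₁ + h) ≠ 0 := fun h₀ => hne₁ (by rw [hu₁, hv₁, h₀]) (by rw [hv₁', hu₁, h₀])
      refine ⟨k₁ + h, k₁, by omega, by omega, ?_, hu₁', hv₁ ▸ hu₁'⟩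
      have h2h : ((2 * h : ℕ) : ZMod (2 * h)) = 0 := ZMod.natCast_self _
      push_cast at h2h ⊢
      linear_combination -h2h
    · exact ⟨k₁, k₁ + h, by omega, by omega, by push_cast; rfl, hu₁, hv₁' ▸ hu₁⟩
  intro k hk
  refine (hpair k hk).elim (fun ⟨h₁, h₂⟩ => ?_) id
  have hagree : ∀ a < 2 * h, u a = v a → u a = 0 := fun a ha hav => by
    by_contra hua
    exact hua (hav.trans (eq_zero_of_overlap_shifted hm hu hv hb hb' hbb' hub hvb' ha hua))
  rw [← h₁, ← h₂, hagree k (by omega) h₁, hagree (k + h) (by omega) h₂]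
  exact ⟨rfl, rfl⟩

end Lift

theorem dft_two_mul_odd (h n : ℕ) (x : ℕ → ℂ) :
    dft (2 * h) x (2 * n + 1) = ∑ k ∈ Finset.range h,
      (x k - x (k + h)) * exp (-2 * π * I * ((k : ℂ) * (2 * n + 1 : ℕ)) / (2 * h : ℕ)) := by
  rcases eq_or_ne h 0 with rfl | hh
  · simp [dft]
  rw [dft, two_mul h, Finset.sum_range_add, ← Finset.sum_add_distrib]
  refine Finset.sum_congr rfl fun k _ => ?_
  have hsplit : -2 * π * I * (((h + k : ℕ) : ℂ) * (2 * n + 1 : ℕ)) / (h + h : ℕ) =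
      -2 * π * I * ((k : ℂ) * (2 * n + 1 : ℕ)) / (h + h : ℕ) + (2 * n + 1 : ℕ) * -(π * I) := by
    push_cast
    field_simp
    ring
  rw [hsplit, exp_add, exp_nat_mul, exp_neg_pi_mul_I, Odd.neg_one_pow ⟨n, rfl⟩, add_comm h k]
  ring

theorem dft_two_mul_odd_eq_neg_of_swap {h : ℕ} {u v : ℕ → ℂ}
    (hswap : ∀ k < h, v k = u (k + h) ∧ v (k + h) = u k) (n : ℕ) :
    dft (2 * h) v (2 * n + 1) = -dft (2 * h) u (2 * n + 1) := by
  rw [dft_two_mul_odd, dft_two_mul_odd, ← Finset.sum_neg_distrib]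
  refine Finset.sum_congr rfl fun k hk => ?_
  rw [(hswap k (Finset.mem_range.mp hk)).1, (hswap k (Finset.mem_range.mp hk)).2]
  ring

theorem unique_lift_from_odd_coeff_general (j m k₀ : ℕ) (hm : m ≤ 2 ^ (j - 1))
    (u v : ℕ → ℂ) (μu μv : ℕ)
    (hu : ∀ k < 2 ^ (j + 1), (∀ r < m, k ≠ (μu + r) % 2 ^ (j + 1)) → u k = 0)
    (hv : ∀ k < 2 ^ (j + 1), (∀ r < m, k ≠ (μv + r) % 2 ^ (j + 1)) → v k = 0)
    (hper : ∀ k < 2 ^ j, u k + u (k + 2 ^ j) = v k + v (k + 2 ^ j))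
    (hdft : dft (2 ^ (j + 1)) u (2 * k₀ + 1) = dft (2 ^ (j + 1)) v (2 * k₀ + 1))
    (hne : dft (2 ^ (j + 1)) u (2 * k₀ + 1) ≠ 0) :
    ∀ k < 2 ^ (j + 1), u k = v k := by
  have hm' : 2 * m ≤ 2 ^ j + 1 := by
    rcases j with _ | j
    · rw [zero_tsub, pow_zero] at hm; omega
    · rw [add_tsub_cancel_right] at hm; rw [pow_succ]; omega
  rw [pow_succ'] at hu hv hdft hne ⊢
  rcases eq_or_swap_of_periodization_eq hm' (isSupportedIn_cyclicInterval hu)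
    (isSupportedIn_cyclicInterval hv) hper with heq | hswap
  · exact heq
  · have hneg := dft_two_mul_odd_eq_neg_of_swap hswap k₀
    exact absurd (by linear_combination (hdft + hneg) / 2) hne

/-- A vector of length `2^{j+1}` with support in a cyclic interval of length `m ≤ 2^{j-1}`
is uniquely determined by its `2^j`-periodization together with one nonzero odd-indexed
DFT coefficient. -/
theorem unique_lift_from_odd_coeff (j m k₀ : ℕ) (hj : 1 ≤ j) (hm : m ≤ 2 ^ (j - 1))
    (u v : ℕ → ℂ) (μu μv : ℕ)
    (hu : ∀ k < 2 ^ (j + 1), (∀ r < m, k ≠ (μu + r) % 2 ^ (j + 1)) → u k = 0)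
    (hv : ∀ k < 2 ^ (j + 1), (∀ r < m, k ≠ (μv + r) % 2 ^ (j + 1)) → v k = 0)
    (hper : ∀ k < 2 ^ j, u k + u (k + 2 ^ j) = v k + v (k + 2 ^ j))
    (hdft : dft (2 ^ (j + 1)) u (2 * k₀ + 1) = dft (2 ^ (j + 1)) v (2 * k₀ + 1))
    (hne : dft (2 ^ (j + 1)) u (2 * k₀ + 1) ≠ 0) :
    ∀ k < 2 ^ (j + 1), u k = v k :=
  unique_lift_from_odd_coeff_general j m k₀ hm u v μu μv hu hv hper hdft hne
end

section
/- Let x ∈ ℂ^N, N = 2^J, have support {(μ+r) mod N : r = 0,...,m-1} with m < 2^{L+1} ≤ N, μ = μ^(L+1) + 2^{L+1}ν, and let κ₀,...,κ_B ∈ {0,...,2^{J-L-1}-1} be distinct. With z^(κ) as above, the averaging formula x_{(μ+k) mod N} = (1/(B+1)) Σ_{r=0}^{B} z^(κ_r)_{(μ^(L+1)+k) mod 2^{L+1}} ω_N^{-κ_r(μ+k)} holds exactly for all k = 0,...,m-1. -/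
open Complex Finset
open scoped Real

lemma sum_range_exp_two_pi_I_mul_div_eq_ite (M : ℕ) (hM : M ≠ 0) (d : ℤ) :
    ∑ k ∈ range M, exp (2 * π * I * (k * d) / M) = if (M : ℤ) ∣ d then (M : ℂ) else 0 := by
  have hξ := isPrimitiveRoot_exp M hM
  have hterm : ∀ k : ℕ, exp (2 * π * I * (k * d) / M) = (exp (2 * π * I / M) ^ d) ^ k := by
    intro k
    rw [← exp_int_mul, ← exp_nat_mul]
    ring_nf
  simp_rw [hterm]
  split_ifs with hd
  · simp [(hξ.zpow_eq_one_iff_dvd d).2 hd]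
  · have hne : exp (2 * π * I / M) ^ d ≠ 1 := mt (hξ.zpow_eq_one_iff_dvd d).1 hd
    rw [geom_sum_eq hne, ← zpow_natCast, ← zpow_mul, mul_comm d, zpow_mul, zpow_natCast,
      hξ.pow_eq_one, one_zpow, sub_self, zero_div]

lemma exp_two_pi_I_mul_div_eq_of_modEq {N a b : ℕ} (hN : N ≠ 0) (h : a ≡ b [MOD N]) :
    exp (2 * π * I * a / N) = exp (2 * π * I * b / N) := by
  have hξ := isPrimitiveRoot_exp N hN
  have hpow : ∀ n : ℕ, exp (2 * π * I * n / N) = exp (2 * π * I / N) ^ n := by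
    intro n
    rw [← exp_nat_mul]
    ring_nf
  rw [hpow, hpow]
  exact (hξ.isOfFinOrder hN).pow_eq_pow_iff_modEq.2 (hξ.eq_orderOf ▸ h)

lemma inverse_dft_subsample_eq_sum_modEq (M P : ℕ) (hM : M ≠ 0) (hP : P ≠ 0) (x : ℕ → ℂ)
    (κ ℓ : ℕ) :
    (M : ℂ)⁻¹ * ∑ k ∈ range M, dft (M * P) x (P * k + κ) * exp (2 * π * I * (k * ℓ) / M) =
      ∑ j ∈ range (M * P),
        if j ≡ ℓ [MOD M] then x j * exp (-2 * π * I * (j * κ) / (M * P : ℕ)) else 0 := by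
  unfold dft
  simp_rw [sum_mul]
  rw [sum_comm, mul_sum]
  refine sum_congr rfl fun j _ => ?_
  have hsplit : ∀ k : ℕ,
      x j * exp (-2 * π * I * (j * (P * k + κ : ℕ)) / (M * P : ℕ)) *
          exp (2 * π * I * (k * ℓ) / M) =
        x j * exp (-2 * π * I * (j * κ) / (M * P : ℕ)) *
          exp (2 * π * I * (k * ((ℓ : ℤ) - j : ℤ)) / M) := by
    intro k
    rw [mul_assoc (x j), mul_assoc (x j), ← exp_add, ← exp_add]
    congr 2
    push_cast
    field_simp
    ring
  simp_rw [hsplit, ← mul_sum, sum_range_exp_two_pi_I_mul_div_eq_ite M hM, Nat.modEq_iff_dvd]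
  split_ifs
  · field_simp
  · simp

lemma zvec_eq_sum_modEq (J L : ℕ) (hL : L + 1 ≤ J) (x : ℕ → ℂ) (κ ℓ : ℕ) :
    zvec J L x κ ℓ = ∑ j ∈ range (2 ^ J),
      if j ≡ ℓ [MOD 2 ^ (L + 1)] then x j * exp (-2 * π * I * (j * κ) / 2 ^ J) else 0 := by
  have h := inverse_dft_subsample_eq_sum_modEq (2 ^ (L + 1)) (2 ^ (J - L - 1)) (by positivity)
    (by positivity) x κ ℓ
  rw [← pow_add, show L + 1 + (J - L - 1) = J by omega] at h
  push_cast at h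
  exact h

lemma eq_of_mod_add_modEq_add {N M m μ r k : ℕ} (hMN : M ∣ N) (hmM : m ≤ M) (hr : r < m)
    (hk : k < m) (h : (μ + r) % N ≡ μ + k [MOD M]) : r = k := by
  have hrk : r ≡ k [MOD M] := Nat.ModEq.add_left_cancel' μ ((Nat.mod_mod_of_dvd _ hMN).symm.trans h)
  rwa [Nat.ModEq, Nat.mod_eq_of_lt (hr.trans_le hmM), Nat.mod_eq_of_lt (hk.trans_le hmM)] at hrk

lemma sum_ite_modEq_eq_of_support_window {N M m μ k ℓ : ℕ} (hN : N ≠ 0) (hMN : M ∣ N)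
    (hmM : m ≤ M) (hk : k < m) (hℓ : μ + k ≡ ℓ [MOD M]) (x : ℕ → ℂ)
    (hsupp : ∀ j < N, (∀ r < m, j ≠ (μ + r) % N) → x j = 0) (g : ℕ → ℂ) :
    ∑ j ∈ range N, (if j ≡ ℓ [MOD M] then x j * g j else 0) =
      x ((μ + k) % N) * g ((μ + k) % N) := by
  have hmem : (μ + k) % N ∈ range N := mem_range.2 (Nat.mod_lt _ (Nat.pos_of_ne_zero hN))
  have hmod : (μ + k) % N ≡ ℓ [MOD M] := (Nat.mod_mod_of_dvd _ hMN).trans hℓ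
  rw [sum_eq_single_of_mem _ hmem, if_pos hmod]
  intro j hj hne
  split_ifs with hjℓ
  · rw [hsupp j (mem_range.1 hj) ?_, zero_mul]
    rintro r hr rfl
    exact hne (by rw [eq_of_mod_add_modEq_add hMN hmM hr hk (hjℓ.trans hℓ.symm)])
  · rfl

theorem averaging_formula_general (J L m μL ν B : ℕ) (κs : ℕ → ℕ) (hL : L + 1 < J)
    (hm : m < 2 ^ (L + 1))
    (x : ℕ → ℂ)
    (hsupp : ∀ k < 2 ^ J,
      (∀ r < m, k ≠ (μL + 2 ^ (L + 1) * ν + r) % 2 ^ J) → x k = 0) :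
    ∀ k < m,
      x ((μL + 2 ^ (L + 1) * ν + k) % 2 ^ J) =
        ((B : ℂ) + 1)⁻¹ * ∑ r ∈ Finset.range (B + 1),
          zvec J L x (κs r) ((μL + k) % 2 ^ (L + 1)) *
            Complex.exp (2 * Real.pi * Complex.I *
              ((κs r : ℂ) * (μL + 2 ^ (L + 1) * ν + k : ℕ)) / 2 ^ J) := by
  intro k hk
  set μ := μL + 2 ^ (L + 1) * ν
  have hℓ : μ + k ≡ (μL + k) % 2 ^ (L + 1) [MOD 2 ^ (L + 1)] := by
    simp [μ, Nat.ModEq, add_right_comm μL]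
  have hphase : ∀ κ : ℕ, exp (-2 * π * I * (((μ + k) % 2 ^ J : ℕ) * κ) / 2 ^ J) *
      exp (2 * π * I * (κ * (μ + k : ℕ)) / 2 ^ J) = 1 := by
    intro κ
    have h := exp_two_pi_I_mul_div_eq_of_modEq (by positivity)
      ((Nat.mod_modEq (μ + k) (2 ^ J)).mul_left κ)
    push_cast at h ⊢
    rw [← h, ← exp_add, ← exp_zero]
    ring_nf
  have hterm : ∀ r, zvec J L x (κs r) ((μL + k) % 2 ^ (L + 1)) *
      exp (2 * π * I * (κs r * (μ + k : ℕ)) / 2 ^ J) = x ((μ + k) % 2 ^ J) := by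
    intro r
    rw [zvec_eq_sum_modEq J L hL.le, sum_ite_modEq_eq_of_support_window (by positivity)
      (pow_dvd_pow 2 hL.le) hm.le hk hℓ x hsupp, mul_assoc, hphase, mul_one]
  rw [sum_congr rfl fun r _ => hterm r, sum_const, card_range, nsmul_eq_mul]
  push_cast
  field_simp

/-- Exact averaging formula: the support values of `x` are recovered by averaging the
phase-corrected components of the vectors `z^{(κ_r)}` over distinct shifts `κ_0,…,κ_B`. -/
theorem averaging_formula (J L m μL ν B : ℕ) (κs : ℕ → ℕ) (hL : L + 1 < J)
    (hm : m < 2 ^ (L + 1)) (hμL : μL < 2 ^ (L + 1)) (hν : ν < 2 ^ (J - L - 1))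
    (hκlt : ∀ r < B + 1, κs r < 2 ^ (J - L - 1))
    (hκinj : ∀ r₁ < B + 1, ∀ r₂ < B + 1, κs r₁ = κs r₂ → r₁ = r₂)
    (x : ℕ → ℂ)
    (hsupp : ∀ k < 2 ^ J,
      (∀ r < m, k ≠ (μL + 2 ^ (L + 1) * ν + r) % 2 ^ J) → x k = 0) :
    ∀ k < m,
      x ((μL + 2 ^ (L + 1) * ν + k) % 2 ^ J) =
        ((B : ℂ) + 1)⁻¹ * ∑ r ∈ Finset.range (B + 1),
          zvec J L x (κs r) ((μL + k) % 2 ^ (L + 1)) *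
            Complex.exp (2 * Real.pi * Complex.I *
              ((κs r : ℂ) * (μL + 2 ^ (L + 1) * ν + k : ℕ)) / 2 ^ J) :=
  averaging_formula_general J L m μL ν B κs hL hm x hsupp
end

section
/- Let x ∈ ℂ^N, N ≥ 2, be nonzero with support contained in a cyclic interval of length m ≤ N/2. Then the support interval of minimal length and the first support index μ of x are uniquely determined: if x vanishes outside both {(μ₁+r) mod N : r=0,...,m-1} and {(μ₂+r) mod N : r=0,...,m-1} with x_{μ₁} ≠ 0, x_{(μ₁+m-1) mod N} ≠ 0, x_{μ₂} ≠ 0, x_{(μ₂+m-1) mod N} ≠ 0, and m is minimal with this property, then μ₁ = μ₂. -/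
/-!
Both first indices are nonzero entries, so each lies in the other's support interval:
`μ₂ ≡ μ₁ + r` and `μ₁ ≡ μ₂ + s (mod N)` with `r, s < m`. Then `N ∣ r + s < 2m ≤ N`,
so `r = s = 0`.
-/

theorem Nat.eq_of_eq_add_mod_of_eq_add_mod {N a b r s : ℕ} (hb : b = (a + r) % N)
    (ha : a = (b + s) % N) (hrs : r + s < N) : a = b := by
  have hloop : a = (a + (r + s)) % N := by
    rw [← add_assoc, ← Nat.mod_add_mod, ← hb, ← ha]
  have ha_lt : a < N := ha ▸ Nat.mod_lt _ (by omega)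
  have hrs_mod : (r + s) % N = 0 % N :=
    Nat.ModEq.add_left_cancel' a (by rw [Nat.ModEq, add_zero, ← hloop, Nat.mod_eq_of_lt ha_lt])
  have hrs_zero : r + s = 0 :=
    Nat.eq_zero_of_dvd_of_lt (Nat.modEq_zero_iff_dvd.mp hrs_mod) hrs
  rw [hb, show r = 0 by omega, add_zero, Nat.mod_eq_of_lt ha_lt]

theorem exists_lt_eq_add_mod_of_ne_zero {M : Type*} [Zero M] {N m μ k : ℕ} {x : ℕ → M}
    (hx : ∀ k < N, (∀ r < m, k ≠ (μ + r) % N) → x k = 0) (hk : k < N) (hxk : x k ≠ 0) :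
    ∃ r < m, k = (μ + r) % N := by
  by_contra! h
  exact hxk (hx k hk h)

theorem first_support_index_unique_general (N m μ₁ μ₂ : ℕ) (hm2 : 2 * m ≤ N)
    (x : ℕ → ℂ) (hμ₁ : μ₁ < N) (hμ₂ : μ₂ < N)
    (h₁ : ∀ k < N, (∀ r < m, k ≠ (μ₁ + r) % N) → x k = 0)
    (h₂ : ∀ k < N, (∀ r < m, k ≠ (μ₂ + r) % N) → x k = 0)
    (hx₁ : x μ₁ ≠ 0)
    (hx₂ : x μ₂ ≠ 0) :
    μ₁ = μ₂ := by
  obtain ⟨r, hr, hμ₂r⟩ := exists_lt_eq_add_mod_of_ne_zero h₁ hμ₂ hx₂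
  obtain ⟨s, hs, hμ₁s⟩ := exists_lt_eq_add_mod_of_ne_zero h₂ hμ₁ hx₁
  exact Nat.eq_of_eq_add_mod_of_eq_add_mod hμ₂r hμ₁s (by omega)

/-- For `m ≤ N/2`, the first index of a minimal cyclic support interval of a vector
`x ∈ ℂ^N` is uniquely determined. -/
theorem first_support_index_unique (N m μ₁ μ₂ : ℕ) (hN : 2 ≤ N) (hm2 : 2 * m ≤ N)
    (x : ℕ → ℂ) (hμ₁ : μ₁ < N) (hμ₂ : μ₂ < N)
    (h₁ : ∀ k < N, (∀ r < m, k ≠ (μ₁ + r) % N) → x k = 0)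
    (h₂ : ∀ k < N, (∀ r < m, k ≠ (μ₂ + r) % N) → x k = 0)
    (hx₁ : x μ₁ ≠ 0) (hx₁e : x ((μ₁ + m - 1) % N) ≠ 0)
    (hx₂ : x μ₂ ≠ 0) (hx₂e : x ((μ₂ + m - 1) % N) ≠ 0)
    (hmin : ∀ m', (∃ μ' < N, ∀ k < N, (∀ r < m', k ≠ (μ' + r) % N) → x k = 0) → m ≤ m') :
    μ₁ = μ₂ :=
  first_support_index_unique_general N m μ₁ μ₂ hm2 x hμ₁ hμ₂ h₁ h₂ hx₁ hx₂
end
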